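/- arXiv:2309.12372 — 2 statements merged into one kernel-verified Lean document; each statement's English description precedes it below -/
import Mathlib

section
/- Let M be the Puiseux monoid generated by {1/2} ∪ {1/3^n : n ∈ ℕ}. Then M is quasi-Furstenberg but not atomic. -/
/-- `a` is an atom of the Puiseux monoid `M`. -/
def IsAtomIn (M : AddSubmonoid ℚ) (a : ℚ) : Prop :=
  a ∈ M ∧ a ≠ 0 ∧ ∀ x ∈ M, ∀ y ∈ M, a = x + y → x = 0 ∨ y = 0

/-- `b` is atomic in `M`: it is `0` or a sum of atoms of `M`. -/
def AtomicIn (M : AddSubmonoid ℚ) (b : ℚ) : Prop :=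
  b ∈ AddSubmonoid.closure {a | IsAtomIn M a}

/-- `x` divides `y` in `M`. -/
def DvdIn (M : AddSubmonoid ℚ) (x y : ℚ) : Prop := y - x ∈ M

def QuasiFurstenberg (M : AddSubmonoid ℚ) : Prop :=
  ∀ b ∈ M, b ≠ 0 → ∃ c ∈ M, ∃ a, IsAtomIn M a ∧ DvdIn M a (b + c) ∧ ¬ DvdIn M a c

def QuasiAtomic (M : AddSubmonoid ℚ) : Prop :=
  ∀ b ∈ M, ∃ c ∈ M, AtomicIn M (b + c)

def AlmostFurstenberg (M : AddSubmonoid ℚ) : Prop :=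
  ∀ b ∈ M, b ≠ 0 →
    ∃ c, AtomicIn M c ∧ ∃ a, IsAtomIn M a ∧ DvdIn M a (b + c) ∧ ¬ DvdIn M a c

def NearlyFurstenberg (M : AddSubmonoid ℚ) : Prop :=
  ∃ c ∈ M, ∀ b ∈ M, b ≠ 0 → ∃ a, IsAtomIn M a ∧ DvdIn M a (b + c) ∧ ¬ DvdIn M a c

def Furstenberg (M : AddSubmonoid ℚ) : Prop :=
  ∀ b ∈ M, b ≠ 0 → ∃ a, IsAtomIn M a ∧ DvdIn M a b

def Antimatter (M : AddSubmonoid ℚ) : Prop := ∀ a, ¬ IsAtomIn M a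

def AtomicMonoid (M : AddSubmonoid ℚ) : Prop := ∀ b ∈ M, AtomicIn M b

def NearlyAtomic (M : AddSubmonoid ℚ) : Prop :=
  ∃ c ∈ M, ∀ b ∈ M, b ≠ 0 → AtomicIn M (b + c)

def AlmostAtomic (M : AddSubmonoid ℚ) : Prop :=
  ∀ b ∈ M, ∃ c, AtomicIn M c ∧ AtomicIn M (b + c)

/-- The Puiseux monoid generated by `{1/2} ∪ {1/3^n : n ∈ ℕ}`. -/
def M7 : AddSubmonoid ℚ :=
  AddSubmonoid.closure ({1/2} ∪ {q : ℚ | ∃ n : ℕ, 0 < n ∧ q = 1/3^n})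

lemma mem_M7 (m k n : ℕ) : ((m : ℚ)/2 + (k : ℚ)/3^(n+1)) ∈ M7 := by
  have h1 : (1/2 : ℚ) ∈ M7 := AddSubmonoid.subset_closure (Or.inl rfl)
  have h2 : (1/3^(n+1) : ℚ) ∈ M7 :=
    AddSubmonoid.subset_closure (Or.inr ⟨n+1, Nat.succ_pos n, rfl⟩)
  have := AddSubmonoid.add_mem M7 (AddSubmonoid.nsmul_mem M7 h1 m)
    (AddSubmonoid.nsmul_mem M7 h2 k)
  simpa [nsmul_eq_mul, mul_one_div, div_eq_mul_inv, mul_comm] using this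

lemma M7_char {q : ℚ} (hq : q ∈ M7) : ∃ m k n : ℕ, q = (m : ℚ)/2 + (k : ℚ)/3^(n+1) := by
  induction hq using AddSubmonoid.closure_induction with
  | mem x hx =>
    rcases hx with hx | ⟨n, hn, rfl⟩
    · rw [Set.mem_singleton_iff] at hx; exact ⟨1, 0, 0, by norm_num [hx]⟩
    · obtain ⟨n', rfl⟩ := Nat.exists_eq_add_of_lt hn
      exact ⟨0, 1, n', by push_cast; ring_nf⟩
  | zero => exact ⟨0, 0, 0, by norm_num⟩
  | add x y hx hy ihx ihy =>
    obtain ⟨m1, k1, n1, rfl⟩ := ihx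
    obtain ⟨m2, k2, n2, rfl⟩ := ihy
    refine ⟨m1 + m2, k1 * 3^(n2+1) + k2 * 3^(n1+1), n1 + n2 + 1, ?_⟩
    push_cast
    field_simp
    ring

lemma M7_nonneg {q : ℚ} (hq : q ∈ M7) : 0 ≤ q := by
  obtain ⟨m, k, n, rfl⟩ := M7_char hq
  positivity

lemma half_atom : IsAtomIn M7 (1/2) := by
  refine ⟨by simpa using mem_M7 1 0 0, by norm_num, ?_⟩
  intro x hx y hy hxy
  obtain ⟨m, k, n, rfl⟩ := M7_char hx
  obtain ⟨m', k', n', rfl⟩ := M7_char hy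
  have key : (3:ℚ)^(n+1) * 3^(n'+1) =
      (m + m') * (3^(n+1) * 3^(n'+1)) + 2 * (k * 3^(n'+1) + k' * 3^(n+1)) := by
    field_simp at hxy
    linarith
  have keyn : 3^(n+1) * 3^(n'+1) =
      (m + m') * (3^(n+1) * 3^(n'+1)) + 2 * (k * 3^(n'+1) + k' * 3^(n+1)) := by
    exact_mod_cast key
  have hPodd : Odd ((3:ℕ)^(n+1) * 3^(n'+1)) :=
    (Odd.pow (by decide)).mul (Odd.pow (by decide))
  have hPpos : 0 < (3:ℕ)^(n+1) * 3^(n'+1) := by positivity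
  have h3 : 0 < (3:ℕ)^(n'+1) := by positivity
  have h4 : 0 < (3:ℕ)^(n+1) := by positivity
  have hs : m + m' ≤ 1 := by
    have h1 : (m + m') * (3^(n+1) * 3^(n'+1)) ≤ 1 * (3^(n+1) * 3^(n'+1)) := by
      rw [one_mul]; nlinarith [Nat.zero_le (k * 3^(n'+1) + k' * 3^(n+1))]
    exact Nat.le_of_mul_le_mul_right h1 hPpos
  have h0 : m + m' = 0 ∨ m + m' = 1 := by omega
  rcases h0 with h | h
  · rw [h, zero_mul, zero_add] at keyn
    have heven : Even ((3:ℕ)^(n+1) * 3^(n'+1)) :=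
      ⟨k * 3^(n'+1) + k' * 3^(n+1), by linarith⟩
    exact ((Nat.not_odd_iff_even.mpr heven) hPodd).elim
  · rw [h, one_mul] at keyn
    have hQ : k * 3^(n'+1) + k' * 3^(n+1) = 0 := by linarith
    have hk : k = 0 := by
      rcases Nat.mul_eq_zero.mp (Nat.eq_zero_of_add_eq_zero_right hQ) with h' | h'
      · exact h'
      · omega
    have hk' : k' = 0 := by
      rcases Nat.mul_eq_zero.mp (Nat.eq_zero_of_add_eq_zero_left hQ) with h' | h'
      · exact h'
      · omega
    subst hk hk'
    have : m = 0 ∨ m' = 0 := by omega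
    rcases this with h0 | h0
    · left; simp [h0]
    · right; simp [h0]

lemma frac_sub_half_not_mem {j n : ℕ} (hj0 : 0 < j) (hjn : j < 3^(n+1)) :
    (j : ℚ)/3^(n+1) - 1/2 ∉ M7 := by
  intro hmem
  obtain ⟨m, k, n', heq⟩ := M7_char hmem
  have key : (2:ℚ) * j * 3^(n'+1) =
      (m + 1) * (3^(n+1) * 3^(n'+1)) + 2 * k * 3^(n+1) := by
    field_simp at heq
    linarith
  have keyn : 2 * j * 3^(n'+1) = (m + 1) * (3^(n+1) * 3^(n'+1)) + 2 * k * 3^(n+1) := by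
    exact_mod_cast key
  have hPpos : 0 < (3:ℕ)^(n+1) * 3^(n'+1) := by positivity
  have h3 : 0 < (3:ℕ)^(n'+1) := by positivity
  -- m + 1 ≤ 1, i.e. m = 0
  have hm : m = 0 := by
    by_contra hm
    have h2 : 2 * (3^(n+1) * 3^(n'+1)) ≤ (m+1) * (3^(n+1) * 3^(n'+1)) :=
      Nat.mul_le_mul_right _ (by omega)
    have h5 : 2 * j * 3^(n'+1) < 2 * (3^(n+1) * 3^(n'+1)) := by
      calc 2 * j * 3^(n'+1) < 2 * 3^(n+1) * 3^(n'+1) := by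
            exact Nat.mul_lt_mul_of_lt_of_le (by omega) le_rfl h3
        _ = 2 * (3^(n+1) * 3^(n'+1)) := by ring
    nlinarith [Nat.zero_le (2 * k * 3^(n+1))]
  rw [hm] at keyn
  have hPodd : Odd ((3:ℕ)^(n+1) * 3^(n'+1)) :=
    (Odd.pow (by decide)).mul (Odd.pow (by decide))
  rw [zero_add, one_mul] at keyn
  have keyn2 : 2 * (j * 3^(n'+1)) = (3^(n+1) * 3^(n'+1)) + 2 * (k * 3^(n+1)) := by
    linarith
  have heven : Even ((3:ℕ)^(n+1) * 3^(n'+1)) := by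
    refine ⟨j * 3^(n'+1) - k * 3^(n+1), ?_⟩
    omega
  exact (Nat.not_odd_iff_even.mpr heven) hPodd

lemma atom_eq_half {a : ℚ} (ha : IsAtomIn M7 a) : a = 1/2 := by
  obtain ⟨haM, ha0, hdec⟩ := ha
  obtain ⟨m, k, n, rfl⟩ := M7_char haM
  rcases Nat.eq_zero_or_pos k with hk | hk
  · -- a = m/2
    subst hk
    rcases Nat.lt_or_ge m 2 with hm | hm
    · rcases (by omega : m = 0 ∨ m = 1) with h | h
      · exfalso; apply ha0; simp [h]
      · simp [h]
    · exfalso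
      have hx : (1/2 : ℚ) ∈ M7 := by simpa using mem_M7 1 0 0
      have hy : ((m - 1 : ℕ) : ℚ)/2 ∈ M7 := by simpa using mem_M7 (m-1) 0 0
      have heq : (m : ℚ)/2 + ((0:ℕ):ℚ)/3^(n+1) = 1/2 + ((m - 1 : ℕ) : ℚ)/2 := by
        have : ((m - 1 : ℕ) : ℚ) = (m : ℚ) - 1 := by
          push_cast [Nat.cast_sub (by omega : 1 ≤ m)]; ring
        rw [this]; push_cast; ring
      rcases hdec _ hx _ hy heq with h | h
      · norm_num at h
      · rw [div_eq_zero_iff] at h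
        rcases h with h | h
        · have : m - 1 = 0 := by exact_mod_cast h
          omega
        · norm_num at h
  · -- k ≥ 1
    exfalso
    have hx : (m : ℚ)/2 + ((k - 1 : ℕ) : ℚ)/3^(n+1) ∈ M7 := mem_M7 m (k-1) n
    have hy : (1 : ℚ)/3^(n+1) ∈ M7 := by simpa using mem_M7 0 1 n
    have hc : ((k - 1 : ℕ) : ℚ) = (k : ℚ) - 1 := by
      push_cast [Nat.cast_sub (by omega : 1 ≤ k)]; ring
    have heq : (m : ℚ)/2 + (k : ℚ)/3^(n+1)
        = ((m : ℚ)/2 + ((k - 1 : ℕ) : ℚ)/3^(n+1)) + 1/3^(n+1) := by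
      rw [hc]; ring
    rcases hdec _ hx _ hy heq with h | h
    · -- x = 0 forces a = 1/3^(n+1), which decomposes
      have h3 : (0:ℚ) < 3^(n+1) := by positivity
      have h1 : (0:ℚ) ≤ (m : ℚ)/2 := by positivity
      have h2 : (0:ℚ) ≤ ((k - 1 : ℕ) : ℚ)/3^(n+1) := by positivity
      have hm0 : (m : ℚ) = 0 := by
        have hm2 : (m : ℚ)/2 = 0 := by linarith
        linarith
      have hk1 : (k : ℚ) = 1 := by
        have hq2 : ((k - 1 : ℕ) : ℚ)/3^(n+1) = 0 := by linarith
        rw [div_eq_zero_iff] at hq2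
        rcases hq2 with h' | h'
        · rw [hc] at h'; linarith
        · exact absurd h' (by positivity)
      have ha' : (m : ℚ)/2 + (k : ℚ)/3^(n+1) = 1/3^(n+1) := by
        rw [hm0, hk1]; ring
      have hx' : (1 : ℚ)/3^(n+2) ∈ M7 := by simpa using mem_M7 0 1 (n+1)
      have hy' : (2 : ℚ)/3^(n+2) ∈ M7 := by simpa using mem_M7 0 2 (n+1)
      have heq' : (m : ℚ)/2 + (k : ℚ)/3^(n+1) = 1/3^(n+2) + 2/3^(n+2) := by
        rw [ha']
        have h32 : (3:ℚ)^(n+2) = 3^(n+1) * 3 := by ring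
        rw [h32]
        field_simp
        ring
      rcases hdec _ hx' _ hy' heq' with h' | h'
      · norm_num at h'
      · norm_num at h'
    · norm_num at h

lemma quasiF : QuasiFurstenberg M7 := by
  intro b hb hb0
  obtain ⟨m, k, n, rfl⟩ := M7_char hb
  have hhalf := half_atom
  have hnhalf : ¬ DvdIn M7 (1/2) 0 := by
    intro h
    have := M7_nonneg h
    norm_num at this
  rcases Nat.eq_zero_or_pos m with hm | hm
  · -- m = 0, b = k/3^(n+1)
    subst hm
    simp only [Nat.cast_zero, zero_div, zero_add] at hb hb0 ⊢
    have hk0 : 0 < k := by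
      rcases Nat.eq_zero_or_pos k with h | h
      · exfalso; apply hb0; simp [h]
      · exact h
    obtain ⟨q, hq⟩ : ∃ q, k / 3^(n+1) = q := ⟨_, rfl⟩
    obtain ⟨r, hr'⟩ : ∃ r, k % 3^(n+1) = r := ⟨_, rfl⟩
    have hNpos : 0 < 3^(n+1) := by positivity
    have h1 : 3^(n+1) * q + r = k := by rw [← hq, ← hr']; exact Nat.div_add_mod k _
    have hrlt : r < 3^(n+1) := by rw [← hr']; exact Nat.mod_lt _ hNpos
    by_cases hr : r = 0
    · subst hr
      rw [add_zero] at h1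
      have hqpos : 0 < q := by
        rcases Nat.eq_zero_or_pos q with h | h
        · exfalso; rw [h, mul_zero] at h1; omega
        · exact h
      refine ⟨0, zero_mem _, 1/2, hhalf, ?_, hnhalf⟩
      unfold DvdIn
      have hkq : (k:ℚ) = 3^(n+1) * q := by exact_mod_cast h1.symm
      have heq : (k:ℚ)/3^(n+1) + 0 - 1/2 = ((2*q - 1 : ℕ):ℚ)/2 + ((0:ℕ):ℚ)/3^(0+1) := by
        have hc2 : ((2*q - 1:ℕ):ℚ) = 2*(q:ℚ) - 1 := by
          push_cast [Nat.cast_sub (by omega : 1 ≤ 2*q)]; ring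
        rw [hkq, hc2]
        push_cast
        have h3 : (3:ℚ)^(n+1) ≠ 0 := by positivity
        field_simp
        ring
      rw [heq]
      exact mem_M7 _ _ _
    · refine ⟨((3^(n+1) - r : ℕ):ℚ)/3^(n+1), by simpa using mem_M7 0 (3^(n+1)-r) n,
        1/2, hhalf, ?_, ?_⟩
      · unfold DvdIn
        have hkq : (k:ℚ) = 3^(n+1)*q + r := by exact_mod_cast h1.symm
        have hjq : ((3^(n+1)-r:ℕ):ℚ) = 3^(n+1) - (r:ℚ) := by
          push_cast [Nat.cast_sub (le_of_lt hrlt)]; ring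
        have heq : (k:ℚ)/3^(n+1) + ((3^(n+1)-r:ℕ):ℚ)/3^(n+1) - 1/2
            = ((2*q+1:ℕ):ℚ)/2 + ((0:ℕ):ℚ)/3^(0+1) := by
          rw [hkq, hjq]
          push_cast
          have h3 : (3:ℚ)^(n+1) ≠ 0 := by positivity
          field_simp
          ring
        rw [heq]
        exact mem_M7 _ _ _
      · unfold DvdIn
        exact frac_sub_half_not_mem (by omega) (by omega)
  · -- m ≥ 1
    refine ⟨0, zero_mem _, 1/2, hhalf, ?_, hnhalf⟩
    unfold DvdIn
    have heq : (m:ℚ)/2 + (k:ℚ)/3^(n+1) + 0 - 1/2 = ((m - 1 : ℕ):ℚ)/2 + (k:ℚ)/3^(n+1) := by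
      have : ((m - 1 : ℕ) : ℚ) = (m:ℚ) - 1 := by
        push_cast [Nat.cast_sub (by omega : 1 ≤ m)]; ring
      rw [this]; ring
    rw [heq]
    exact mem_M7 _ _ _

lemma notAtomic : ¬ AtomicMonoid M7 := by
  intro H
  have h13 : (1/3 : ℚ) ∈ M7 := by simpa using mem_M7 0 1 0
  have := H _ h13
  unfold AtomicIn at this
  have hsub : {a | IsAtomIn M7 a} ⊆ {(1/2 : ℚ)} := by
    intro a ha; exact atom_eq_half ha
  have h2 : (1/3 : ℚ) ∈ AddSubmonoid.closure {(1/2 : ℚ)} :=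
    AddSubmonoid.closure_mono hsub this
  rw [AddSubmonoid.mem_closure_singleton] at h2
  obtain ⟨n, hn⟩ := h2
  rw [nsmul_eq_mul] at hn
  have : (n : ℚ) * 3 = 2 := by linarith
  have : n * 3 = 2 := by exact_mod_cast this
  omega

/-- `M7` is quasi-Furstenberg but not atomic. -/
theorem stmt_8 : QuasiFurstenberg M7 ∧ ¬ AtomicMonoid M7 := ⟨quasiF, notAtomic⟩
end

section
/- Let p ≥ 7 be prime and let M_p be the Puiseux monoid generated by {1/p} ∪ (ℕ₀[1/2] \ {0}) ∪ (1/2 - 1/p + (ℕ₀[1/2] \ {0})). Then M_p is nearly Furstenberg but not almost Furstenberg. -/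
/-- The nonzero nonnegative dyadic rationals. -/
def Dy : Set ℚ := {q | ∃ b c : ℕ, 0 < b ∧ q = (b : ℚ)/2^c}

/-- The Puiseux monoid generated by
`{1/p} ∪ (ℕ₀[1/2]\{0}) ∪ (1/2 - 1/p + (ℕ₀[1/2]\{0}))`. -/
def Mp (p : ℕ) : AddSubmonoid ℚ :=
  AddSubmonoid.closure
    ({1/(p : ℚ)} ∪ Dy ∪ {x | ∃ d ∈ Dy, x = 1/2 - 1/(p : ℚ) + d})


lemma dy_pos {d : ℚ} (hd : d ∈ Dy) : 0 < d := by
  obtain ⟨b, c, hb, rfl⟩ := hd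
  have hb' : (0:ℚ) < b := by exact_mod_cast hb
  positivity

lemma dy_half {d : ℚ} (hd : d ∈ Dy) : d / 2 ∈ Dy := by
  obtain ⟨b, c, hb, rfl⟩ := hd
  exact ⟨b, c+1, hb, by push_cast; ring⟩

lemma dy_add {d e : ℚ} (hd : d ∈ Dy) (he : e ∈ Dy) : d + e ∈ Dy := by
  obtain ⟨b, c, hb, rfl⟩ := hd
  obtain ⟨b', c', hb', rfl⟩ := he
  refine ⟨b * 2^c' + b' * 2^c, c + c', by positivity, ?_⟩
  have h1 : ((2:ℚ))^c ≠ 0 := by positivity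
  have h2 : ((2:ℚ))^c' ≠ 0 := by positivity
  push_cast
  rw [div_add_div _ _ h1 h2, pow_add]
  ring_nf

lemma half_dy : (1/2 : ℚ) ∈ Dy := ⟨1, 1, one_pos, by norm_num⟩

def MRep (p : ℕ) (x : ℚ) : Prop :=
  ∃ m k : ℕ, ∃ d : ℚ, (d ∈ Dy ∨ (d = 0 ∧ k = 0)) ∧
    x = m / (p:ℚ) + k * (1/2 - 1/(p:ℚ)) + d

lemma rep_of_mem {p : ℕ} {x : ℚ} (hx : x ∈ Mp p) : MRep p x := by
  induction hx using AddSubmonoid.closure_induction with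
  | mem y hy =>
    rcases hy with (rfl | hy) | ⟨d, hd, rfl⟩
    · exact ⟨1, 0, 0, Or.inr ⟨rfl, rfl⟩, by norm_num⟩
    · exact ⟨0, 0, y, Or.inl hy, by norm_num⟩
    · exact ⟨0, 1, d, Or.inl hd, by push_cast; ring⟩
  | zero => exact ⟨0, 0, 0, Or.inr ⟨rfl, rfl⟩, by norm_num⟩
  | add a b ha hb iha ihb =>
    obtain ⟨m1, k1, d1, hc1, rfl⟩ := iha
    obtain ⟨m2, k2, d2, hc2, rfl⟩ := ihb
    refine ⟨m1 + m2, k1 + k2, d1 + d2, ?_, by push_cast; ring⟩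
    rcases hc1 with h1 | ⟨rfl, rfl⟩ <;> rcases hc2 with h2 | ⟨rfl, rfl⟩
    · exact Or.inl (dy_add h1 h2)
    · exact Or.inl (by simpa using h1)
    · exact Or.inl (by simpa using h2)
    · exact Or.inr ⟨by simp, rfl⟩

lemma third_mem (p : ℕ) (n : ℕ) : ∀ d : ℚ, d ∈ Dy →
    ((n:ℚ)+1) * (1/2 - 1/(p:ℚ)) + d ∈ Mp p := by
  induction n with
  | zero =>
    intro d hd
    have : (1/2 - 1/(p:ℚ) + d) ∈ Mp p :=
      AddSubmonoid.subset_closure (Or.inr ⟨d, hd, rfl⟩)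
    convert this using 1; push_cast; ring
  | succ n ih =>
    intro d hd
    have h1 : (1/2 - 1/(p:ℚ) + d/2) ∈ Mp p :=
      AddSubmonoid.subset_closure (Or.inr ⟨d/2, dy_half hd, rfl⟩)
    have h2 := ih (d/2) (dy_half hd)
    have := add_mem h1 h2
    convert this using 1; push_cast; ring

lemma mem_of_rep {p : ℕ} {x : ℚ} (h : MRep p x) : x ∈ Mp p := by
  obtain ⟨m, k, d, hc, rfl⟩ := h
  have hone : (1/(p:ℚ)) ∈ Mp p := AddSubmonoid.subset_closure (Or.inl (Or.inl rfl))
  have hm : (m:ℚ)/(p:ℚ) ∈ Mp p := by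
    have := AddSubmonoid.nsmul_mem (Mp p) hone m
    convert this using 1
    simp [nsmul_eq_mul]
    ring
  rcases hc with hd | ⟨rfl, rfl⟩
  · rcases Nat.eq_zero_or_pos k with rfl | hk
    · have hdm : d ∈ Mp p := AddSubmonoid.subset_closure (Or.inl (Or.inr hd))
      have := add_mem hm hdm
      convert this using 1; push_cast; ring
    · obtain ⟨n, rfl⟩ := Nat.exists_eq_add_of_le hk
      have := add_mem hm (third_mem p n d hd)
      convert this using 1; push_cast; ring
  · have := hm; convert this using 1; push_cast; ring

lemma mem_nonneg {p : ℕ} (h7 : 7 ≤ p) {x : ℚ} (hx : x ∈ Mp p) : 0 ≤ x := by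
  obtain ⟨m, k, d, hc, rfl⟩ := rep_of_mem hx
  have hp7 : (7:ℚ) ≤ (p:ℚ) := by exact_mod_cast h7
  have hd : 0 ≤ d := by
    rcases hc with hd | ⟨rfl, -⟩
    · exact (dy_pos hd).le
    · exact le_refl 0
  have h1 : (0:ℚ) ≤ (m:ℚ)/(p:ℚ) := by positivity
  have h2 : (0:ℚ) ≤ (k:ℚ) * (1/2 - 1/(p:ℚ)) := by
    have : (1:ℚ)/(p:ℚ) ≤ 1/2 := by
      apply div_le_div_of_nonneg_left <;> linarith
    have hk : (0:ℚ) ≤ k := Nat.cast_nonneg k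
    nlinarith
  linarith

lemma half_not {p : ℕ} (hp : p.Prime) (h7 : 7 ≤ p) : (1/2 - 1/(p:ℚ)) ∉ Mp p := by
  intro hmem
  obtain ⟨m, k, d, hc, heq⟩ := rep_of_mem hmem
  have hppos : 0 < p := by omega
  have hp0 : (p:ℚ) ≠ 0 := by positivity
  have hp7 : (7:ℚ) ≤ (p:ℚ) := by exact_mod_cast h7
  rcases hc with hd | ⟨rfl, rfl⟩
  · rcases Nat.eq_zero_or_pos k with rfl | hk
    · obtain ⟨b, c, hb, rfl⟩ := hd
      have h2c : ((2:ℚ))^c ≠ 0 := by positivity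
      field_simp at heq
      have hQ : (2*(b:ℚ)*(p:ℚ) + 2^(c+1)*((m:ℚ)+1)) = 2^c * (p:ℚ) := by
        apply mul_right_cancel₀ hp0
        linear_combination (-(p:ℚ)) * heq
      have hN : 2*b*p + 2^(c+1)*(m+1) = 2^c * p := by exact_mod_cast hQ
      have h1 : p ∣ 2^(c+1)*(m+1) := by
        have e : 2^(c+1)*(m+1) = 2^c*p - 2*b*p := by omega
        rw [e]
        exact Nat.dvd_sub (dvd_mul_left p _) (dvd_mul_left p _)
      have h2 : p ∣ m + 1 := by
        rcases (Nat.Prime.dvd_mul hp).mp h1 with h | h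
        · have := Nat.le_of_dvd (by norm_num) (hp.dvd_of_dvd_pow h)
          omega
        · exact h
      have h3 : p ≤ m + 1 := Nat.le_of_dvd (by omega) h2
      have h4 : 0 < 2^c := Nat.pow_pos (by norm_num)
      have h5 : 2^(c+1) = 2*2^c := by rw [pow_succ]; ring
      nlinarith [hN, h3, h4, hb]
    · have hdpos := dy_pos hd
      field_simp at heq
      have hk' : (1:ℚ) ≤ k := by exact_mod_cast hk
      have hm' : (0:ℚ) ≤ m := Nat.cast_nonneg m
      have hp0' : (2*(p:ℚ)*(p:ℚ)) ≠ 0 := by positivity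
      have h2 : ((p:ℚ) - 2) = 2*m + k*((p:ℚ)-2) + 2*d*p := by
        apply mul_right_cancel₀ hp0'
        linear_combination (2*(p:ℚ)*(p:ℚ)) * heq
      nlinarith [h2, mul_pos hdpos (by linarith : (0:ℚ) < (p:ℚ)),
        mul_nonneg (by linarith : (0:ℚ) ≤ (k:ℚ) - 1) (by linarith : (0:ℚ) ≤ (p:ℚ) - 2)]
  · have hQ : (p:ℚ) = 2*m + 2 := by
      field_simp at heq
      have h2 : (p:ℚ) - 2 = 2*(m:ℚ) := mul_right_cancel₀ hp0 (by linear_combination (p:ℚ) * heq)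
      linarith
    have hN : p = 2*m + 2 := by exact_mod_cast hQ
    have heven : 2 ∣ p := ⟨m+1, by omega⟩
    have := (Nat.Prime.eq_one_or_self_of_dvd hp 2 heven)
    omega

lemma one_div_mem (p : ℕ) : (1/(p:ℚ)) ∈ Mp p :=
  AddSubmonoid.subset_closure (Or.inl (Or.inl rfl))

lemma atom_one_div {p : ℕ} (hp : p.Prime) (h7 : 7 ≤ p) : IsAtomIn (Mp p) (1/(p:ℚ)) := by
  have hppos : 0 < p := by omega
  have hp0 : (p:ℚ) ≠ 0 := by positivity
  have hp7 : (7:ℚ) ≤ (p:ℚ) := by exact_mod_cast h7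
  refine ⟨one_div_mem p, by positivity, ?_⟩
  intro x hx y hy hxy
  obtain ⟨m1, k1, d1, hc1, rfl⟩ := rep_of_mem hx
  obtain ⟨m2, k2, d2, hc2, rfl⟩ := rep_of_mem hy
  have hd1 : 0 ≤ d1 := by
    rcases hc1 with h | ⟨rfl, -⟩; exacts [(dy_pos h).le, le_refl 0]
  have hd2 : 0 ≤ d2 := by
    rcases hc2 with h | ⟨rfl, -⟩; exacts [(dy_pos h).le, le_refl 0]
  have heq : 1/(p:ℚ) = ((m1+m2:ℕ):ℚ)/(p:ℚ) + ((k1+k2:ℕ):ℚ)*(1/2 - 1/(p:ℚ)) + (d1+d2) := by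
    push_cast; linear_combination hxy
  by_cases hK : k1 + k2 = 0
  · have hk1 : k1 = 0 := by omega
    have hk2 : k2 = 0 := by omega
    subst hk1; subst hk2
    rw [hK] at heq
    by_cases hD0 : d1 + d2 = 0
    · have he1 : d1 = 0 := by linarith
      have he2 : d2 = 0 := by linarith
      rw [hD0] at heq
      push_cast at heq
      have hM' : m1 + m2 = 1 := by
        field_simp at heq
        have h' : ((m1+m2:ℕ):ℚ) = 1 := by push_cast at heq ⊢; linarith
        exact_mod_cast h'
      rcases Nat.eq_zero_or_pos m1 with h1 | h1
      · left; rw [he1, h1]; simp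
      · right
        have : m2 = 0 := by omega
        rw [he2, this]; simp
    · exfalso
      have hD : d1 + d2 ∈ Dy := by
        rcases hc1 with h1 | ⟨rfl, -⟩ <;> rcases hc2 with h2 | ⟨rfl, -⟩
        · exact dy_add h1 h2
        · simpa using h1
        · simpa using h2
        · simp at hD0
      obtain ⟨b, c, hb, hbc⟩ := hD
      rw [hbc] at heq
      push_cast at heq
      have h2c : ((2:ℚ))^c ≠ 0 := by positivity
      have heq2 : ((2:ℚ))^c = ((m1+m2:ℕ):ℚ) * 2^c + (b:ℚ) * (p:ℚ) := by
        field_simp at heq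
        push_cast
        linarith [heq]
      have hN : 2^c = (m1+m2) * 2^c + b * p := by exact_mod_cast heq2
      rcases Nat.eq_zero_or_pos (m1+m2) with hM | hM
      · rw [hM] at hN
        have hdvd : p ∣ 2^c := ⟨b, by rw [Nat.mul_comm p b]; omega⟩
        have := Nat.le_of_dvd (by norm_num) (hp.dvd_of_dvd_pow hdvd)
        omega
      · have h2pos : 0 < 2^c := Nat.pow_pos (by norm_num)
        nlinarith [hN, hM, hb, h2pos, hppos]
  · exfalso
    have hKpos : 1 ≤ k1 + k2 := by omega
    have hDpos : 0 < d1 + d2 := by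
      rcases Nat.eq_zero_or_pos k1 with h | h
      · have hk2 : 1 ≤ k2 := by omega
        rcases hc2 with h2 | ⟨-, h0⟩
        · linarith [dy_pos h2]
        · omega
      · rcases hc1 with h1 | ⟨-, h0⟩
        · linarith [dy_pos h1]
        · omega
    set D := d1 + d2 with hDdef
    set M := m1 + m2 with hMdef
    set K := k1 + k2 with hKdef
    field_simp at heq
    have h2 : (2:ℚ) = 2*(M:ℚ) + (K:ℚ)*((p:ℚ)-2) + 2*D*(p:ℚ) := by
      apply mul_right_cancel₀ hp0
      linear_combination (p:ℚ) * heq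
    have hK' : (1:ℚ) ≤ (K:ℚ) := by exact_mod_cast hKpos
    have hM' : (0:ℚ) ≤ (M:ℚ) := Nat.cast_nonneg M
    nlinarith [h2, mul_pos hDpos (by linarith : (0:ℚ) < (p:ℚ)),
      mul_le_mul_of_nonneg_right hK' (by linarith : (0:ℚ) ≤ (p:ℚ) - 2)]

lemma half_mem (p : ℕ) : (1/2 : ℚ) ∈ Mp p :=
  AddSubmonoid.subset_closure (Or.inl (Or.inr half_dy))

lemma atom_eq {p : ℕ} (hp : p.Prime) (h7 : 7 ≤ p) {a : ℚ}
    (ha : IsAtomIn (Mp p) a) : a = 1/(p:ℚ) := by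
  obtain ⟨hmem, hne, hsplit⟩ := ha
  have hppos : 0 < p := by omega
  have hp0 : (p:ℚ) ≠ 0 := by positivity
  have hp7 : (7:ℚ) ≤ (p:ℚ) := by exact_mod_cast h7
  obtain ⟨m, k, d, hc, rfl⟩ := rep_of_mem hmem
  rcases hc with hd | ⟨rfl, rfl⟩
  · exfalso
    have hdpos := dy_pos hd
    have hx : ((m:ℚ)/(p:ℚ) + (k:ℚ)*(1/2 - 1/(p:ℚ)) + d/2) ∈ Mp p :=
      mem_of_rep ⟨m, k, d/2, Or.inl (dy_half hd), rfl⟩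
    have hy : d/2 ∈ Mp p :=
      AddSubmonoid.subset_closure (Or.inl (Or.inr (dy_half hd)))
    have h1 : (0:ℚ) ≤ (m:ℚ)/(p:ℚ) := by positivity
    have h2 : (0:ℚ) ≤ (k:ℚ) * (1/2 - 1/(p:ℚ)) := by
      have h3 : (1:ℚ)/(p:ℚ) ≤ 1/2 := by
        apply div_le_div_of_nonneg_left <;> linarith
      have hk : (0:ℚ) ≤ k := Nat.cast_nonneg k
      nlinarith
    rcases hsplit _ hx _ hy (by ring) with h | h
    · linarith
    · linarith
  · have hm : 1 ≤ m := by
      by_contra h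
      have : m = 0 := by omega
      subst this
      simp at hne
    rcases Nat.lt_or_ge m 2 with h2 | h2
    · have : m = 1 := by omega
      subst this
      push_cast
      ring
    · exfalso
      have hx : (1/(p:ℚ)) ∈ Mp p := one_div_mem p
      have hy : (((m-1:ℕ):ℚ)/(p:ℚ)) ∈ Mp p :=
        mem_of_rep ⟨m-1, 0, 0, Or.inr ⟨rfl, rfl⟩, by push_cast; ring⟩
      rcases hsplit _ hx _ hy (by push_cast [Nat.cast_sub hm]; ring) with h | h
      · exact absurd h (by positivity)
      · have hm1 : (0:ℚ) < ((m-1:ℕ):ℚ) := by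
          have : 1 ≤ m - 1 := by omega
          exact_mod_cast Nat.lt_of_lt_of_le Nat.zero_lt_one this
        have : (0:ℚ) < ((m-1:ℕ):ℚ)/(p:ℚ) := by positivity
        linarith

lemma atomic_eq {p : ℕ} (hp : p.Prime) (h7 : 7 ≤ p) {x : ℚ}
    (hx : AtomicIn (Mp p) x) : ∃ t : ℕ, x = (t:ℚ)/(p:ℚ) := by
  unfold AtomicIn at hx
  induction hx using AddSubmonoid.closure_induction with
  | mem a ha => exact ⟨1, by rw [atom_eq hp h7 ha]; norm_num⟩
  | zero => exact ⟨0, by simp⟩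
  | add a b _ _ iha ihb =>
    obtain ⟨t1, rfl⟩ := iha
    obtain ⟨t2, rfl⟩ := ihb
    exact ⟨t1 + t2, by push_cast; ring⟩


/-- For a prime `p ≥ 7`, `Mp p` is nearly Furstenberg but not almost
Furstenberg. -/
theorem stmt_14 (p : ℕ) (hp : p.Prime) (h7 : 7 ≤ p) :
    NearlyFurstenberg (Mp p) ∧ ¬ AlmostFurstenberg (Mp p) := by
  have hppos : 0 < p := by omega
  have hp0 : (p:ℚ) ≠ 0 := by positivity
  constructor
  · refine ⟨1/2, half_mem p, ?_⟩
    intro b hb hb0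
    refine ⟨1/(p:ℚ), atom_one_div hp h7, ?_, ?_⟩
    · show b + 1/2 - 1/(p:ℚ) ∈ Mp p
      obtain ⟨m, k, d, hc, rfl⟩ := rep_of_mem hb
      rcases hc with hd | ⟨rfl, rfl⟩
      · exact mem_of_rep ⟨m, k+1, d, Or.inl hd, by push_cast; ring⟩
      · have hm : 1 ≤ m := by
          by_contra h
          have : m = 0 := by omega
          subst this
          simp at hb0
        exact mem_of_rep ⟨m-1, 0, 1/2, Or.inl half_dy,
          by push_cast [Nat.cast_sub hm]; ring⟩
    · show 1/2 - 1/(p:ℚ) ∉ Mp p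
      exact half_not hp h7
  · intro h
    obtain ⟨c, hcat, a, hatom, hdvd, hndvd⟩ := h (1/2) (half_mem p) (by norm_num)
    rw [atom_eq hp h7 hatom] at hdvd hndvd
    obtain ⟨t, rfl⟩ := atomic_eq hp h7 hcat
    rcases Nat.eq_zero_or_pos t with rfl | ht
    · apply half_not hp h7
      have hdvd' : (1:ℚ)/2 + ((0:ℕ):ℚ)/(p:ℚ) - 1/(p:ℚ) ∈ Mp p := hdvd
      simpa using hdvd'
    · apply hndvd
      show (t:ℚ)/(p:ℚ) - 1/(p:ℚ) ∈ Mp p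
      exact mem_of_rep ⟨t-1, 0, 0, Or.inr ⟨rfl, rfl⟩,
        by push_cast [Nat.cast_sub ht]; ring⟩
end
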